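/- Let μ be a σ-finite measure on a measurable space, let φ be a measurable function with φ > 0 μ-almost everywhere and ∫ φ dμ < ∞, let p, q > 1 satisfy 1/p + 1/q = 1, and let M ≥ 0. Then the set K = { f ∈ L¹(μ) : ∫ |f|^p · φ^{-p/q} dμ ≤ M } is relatively compact in L¹(μ) endowed with the weak topology σ(L¹, L^∞). -/

import Mathlib

/-!
Put `g = √φ ∈ L²(μ)` and truncate `f ∈ K` where `|f| ≤ λ φ`: there `f = g h` with `|h| ≤ λ g`, so
`h` lies in a ball of the Hilbert space `L²(μ)`, which is weakly compact, and multiplication by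
`g` maps it continuously into `L¹(μ)`. Off that set `|f| ≤ λ^{1-p} |f|^p φ^{-(p-1)}`, and
`p / q = p - 1`, so the remainder has `L¹` norm at most `λ^{1-p} M`. Hence `K` lies within every
`ε` of a weakly compact set, and Grothendieck's lemma gives relative weak compactness.
-/

open MeasureTheory NormedSpace Bornology Metric Pointwise
open scoped NNReal ENNReal

namespace WeakSpace

variable {𝕜 X : Type*} [RCLike 𝕜] [NormedAddCommGroup X] [NormedSpace 𝕜 X]

theorem isBounded_preimage_of_isCompact {C : Set (WeakSpace 𝕜 X)} (hC : IsCompact C) :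
    IsBounded (toWeakSpace 𝕜 X ⁻¹' C) := by
  have hJC : IsBounded (StrongDual.toWeakDual ⁻¹' (inclusionInDoubleDualWeak 𝕜 X '' C)) :=
    WeakDual.isBounded_toWeakDual_preimage_iff_isBounded.2 <|
      WeakDual.isBounded_iff_isVonNBounded.2 <| (hC.image (inclusionInDoubleDualWeak 𝕜 X).continuous).isVonNBounded 𝕜
  obtain ⟨R, hR⟩ := isBounded_iff_forall_norm_le.1 hJC
  refine isBounded_iff_forall_norm_le.2 ⟨R, fun x hx => ?_⟩
  rw [← (inclusionInDoubleDualLi 𝕜).norm_map x]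
  exact hR _ ⟨_, hx, rfl⟩

theorem exists_norm_sub_le_of_mem_closure_image {S C : Set (WeakSpace 𝕜 X)} (hC : IsCompact C)
    {ε : ℝ} (hSC : ∀ x ∈ S, ∃ y ∈ C,
      ‖(toWeakSpace 𝕜 X).symm x - (toWeakSpace 𝕜 X).symm y‖ ≤ ε)
    {ξ : WeakDual 𝕜 (StrongDual 𝕜 X)} (hξ : ξ ∈ closure (inclusionInDoubleDualWeak 𝕜 X '' S)) :
    ∃ y ∈ C,
      ‖WeakDual.toStrongDual ξ - inclusionInDoubleDualLi 𝕜 ((toWeakSpace 𝕜 X).symm y)‖ ≤ ε := by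
  set J := inclusionInDoubleDualWeak 𝕜 X
  set D := J '' C + WeakDual.toStrongDual ⁻¹' closedBall (0 : StrongDual 𝕜 (StrongDual 𝕜 X)) ε
  have hD : IsClosed D :=
    ((hC.image J.continuous).add (WeakDual.isCompact_closedBall 0 ε)).isClosed
  have hSD : J '' S ⊆ D := by
    rintro - ⟨x, hx, rfl⟩
    obtain ⟨y, hy, hxy⟩ := hSC x hx
    refine ⟨J y, ⟨y, hy, rfl⟩, J x - J y, ?_, add_sub_cancel _ _⟩
    refine (mem_closedBall_zero_iff (a := WeakDual.toStrongDual (J x - J y))).2 ?_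
    rw [← map_sub J]
    change ‖inclusionInDoubleDualLi 𝕜 ((toWeakSpace 𝕜 X).symm (x - y))‖ ≤ ε
    rwa [LinearIsometry.norm_map, map_sub]
  obtain ⟨-, ⟨y, hy, rfl⟩, η, hη, rfl⟩ := closure_minimal hSD hD hξ
  refine ⟨y, hy, ?_⟩
  have hJy : WeakDual.toStrongDual (J y) = inclusionInDoubleDualLi 𝕜 ((toWeakSpace 𝕜 X).symm y) :=
    rfl
  have hsub : WeakDual.toStrongDual (J y + η) - inclusionInDoubleDualLi 𝕜 ((toWeakSpace 𝕜 X).symm y)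
      = WeakDual.toStrongDual η := by
    rw [map_add, hJy]
    abel
  rw [hsub]
  exact (mem_closedBall_zero_iff (a := WeakDual.toStrongDual η)).1 hη

/-- Grothendieck's lemma. The weak-star closure of the image of `S` in the bidual lies within every
`ε` of the image of `X`, which is norm-closed, so it lies in that image and Banach–Alaoglu
applies. -/
theorem isCompact_closure_of_forall_exists_isCompact_norm_sub_le [CompleteSpace X]
    (S : Set (WeakSpace 𝕜 X))
    (happrox : ∀ ε > 0, ∃ C : Set (WeakSpace 𝕜 X), IsCompact C ∧ ∀ x ∈ S, ∃ y ∈ C,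
      ‖(toWeakSpace 𝕜 X).symm x - (toWeakSpace 𝕜 X).symm y‖ ≤ ε) :
    IsCompact (closure S) := by
  refine isCompact_closure_of_isBounded 𝕜 X S ?_ fun ξ hξ => ?_
  · obtain ⟨C, hC, hSC⟩ := happrox 1 one_pos
    obtain ⟨R, hR⟩ := isBounded_iff_forall_norm_le.1 (isBounded_preimage_of_isCompact hC)
    refine isBounded_iff_forall_norm_le.2 ⟨1 + R, fun x hx => ?_⟩
    obtain ⟨y, hy, hxy⟩ := hSC _ hx
    calc ‖x‖ ≤ ‖x - (toWeakSpace 𝕜 X).symm y‖ + ‖(toWeakSpace 𝕜 X).symm y‖ :=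
          norm_le_norm_sub_add _ _
      _ ≤ 1 + R := add_le_add hxy (hR _ hy)
  · have hmem : WeakDual.toStrongDual ξ ∈
        closure (Set.range (inclusionInDoubleDualLi (E := X) 𝕜)) := by
      refine (Metric.mem_closure_iff (α := StrongDual 𝕜 (StrongDual 𝕜 X))).2 fun ε hε => ?_
      obtain ⟨C, hC, hSC⟩ := happrox (ε / 2) (half_pos hε)
      obtain ⟨y, -, hy⟩ := exists_norm_sub_le_of_mem_closure_image hC hSC hξ
      refine ⟨_, ⟨(toWeakSpace 𝕜 X).symm y, rfl⟩, ?_⟩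
      rw [dist_eq_norm (WeakDual.toStrongDual ξ)]
      exact hy.trans_lt (half_lt_self hε)
    rw [(inclusionInDoubleDualLi 𝕜).isometry.isUniformInducing.isComplete_range.isClosed.closure_eq]
      at hmem
    obtain ⟨x, hx⟩ := hmem
    exact ⟨toWeakSpace 𝕜 X x, StrongDual.toWeakDual.symm.injective hx⟩

end WeakSpace

namespace InnerProductSpace

variable {H : Type*} [NormedAddCommGroup H] [InnerProductSpace ℝ H] [CompleteSpace H]

theorem surjective_inclusionInDoubleDualWeak :
    Function.Surjective (inclusionInDoubleDualWeak ℝ H) := by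
  intro ξ
  refine ⟨toWeakSpace ℝ H ((toDual ℝ H).symm
    ((WeakDual.toStrongDual ξ).comp (toDual ℝ H).toContinuousLinearEquiv.toContinuousLinearMap)),
    ?_⟩
  refine DFunLike.ext _ _ fun ℓ => ?_
  obtain ⟨z, rfl⟩ := (toDual ℝ H).surjective ℓ
  change toDual ℝ H z ((toDual ℝ H).symm _) = _
  rw [toDual_apply_apply, real_inner_comm, toDual_symm_apply]
  rfl

theorem isCompact_closure_of_isBounded (S : Set (WeakSpace ℝ H))
    (hb : IsBounded (toWeakSpace ℝ H ⁻¹' S)) : IsCompact (closure S) :=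
  NormedSpace.isCompact_closure_of_isBounded ℝ H S hb fun ξ _ =>
    surjective_inclusionInDoubleDualWeak ξ

end InnerProductSpace

theorem Real.le_rpow_neg_mul_rpow_mul_rpow_neg {p lam c t : ℝ} (hp : 1 < p) (hlam : 0 < lam)
    (hc : 0 < c) (ht : lam * c < t) :
    t ≤ lam ^ (-(p - 1)) * (t ^ p * c ^ (-(p - 1))) := by
  have hlc : 0 < lam * c := mul_pos hlam hc
  have ht0 : 0 < t := hlc.trans ht
  calc t = t * 1 := (mul_one t).symm
    _ ≤ t * (t / (lam * c)) ^ (p - 1) := by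
      gcongr
      exact Real.one_le_rpow ((one_le_div hlc).2 ht.le) (by linarith)
    _ = lam ^ (-(p - 1)) * (t ^ p * c ^ (-(p - 1))) := by
      rw [Real.div_rpow ht0.le hlc.le, Real.mul_rpow hlam.le hc.le, Real.rpow_sub_one ht0.ne',
        Real.rpow_neg hlam.le, Real.rpow_neg hc.le]
      field_simp

theorem abs_div_le_mul_abs_of_abs_le_mul_sq {a b lam : ℝ} (h : |a| ≤ lam * b ^ 2) :
    |a / b| ≤ lam * |b| := by
  rcases eq_or_ne b 0 with rfl | hb
  · simp
  · rwa [abs_div, div_le_iff₀ (abs_pos.2 hb), mul_assoc, ← sq, sq_abs]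

theorem mul_div_cancel_of_abs_le_mul_sq {a b lam : ℝ} (h : |a| ≤ lam * b ^ 2) :
    b * (a / b) = a := by
  rcases eq_or_ne b 0 with rfl | hb
  · simp only [zero_mul, div_zero]
    simpa [eq_comm] using h
  · exact mul_div_cancel₀ a hb

section Measure

variable {α : Type*} [MeasurableSpace α] {μ : Measure α}

theorem MeasureTheory.Integrable.memLp_two_sqrt {φ : α → ℝ} (hφ : Integrable φ μ) :
    MemLp (fun x => √(φ x)) 2 μ := by
  refine (memLp_two_iff_integrable_sq
    (Real.continuous_sqrt.comp_aestronglyMeasurable hφ.aestronglyMeasurable)).2 ?_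
  simpa only [Real.sq_sqrt'] using hφ.pos_part

theorem MeasureTheory.eLpNorm_one_indicator_compl_le {f φ : α → ℝ} {s : Set α} {p lam : ℝ}
    (hp : 1 < p) (hlam : 0 < lam) (hφpos : ∀ᵐ x ∂μ, 0 < φ x)
    (hs : ∀ᵐ x ∂μ, x ∉ s → lam * φ x < |f x|) :
    eLpNorm (sᶜ.indicator f) 1 μ
      ≤ ENNReal.ofReal (lam ^ (-(p - 1)))
          * ∫⁻ x, ENNReal.ofReal (|f x| ^ p * φ x ^ (-(p - 1))) ∂μ := by
  rw [eLpNorm_one_eq_lintegral_enorm, ← lintegral_const_mul' _ _ ENNReal.ofReal_ne_top]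
  refine lintegral_mono_ae ?_
  filter_upwards [hφpos, hs] with x hφx hsx
  by_cases hx : x ∈ s
  · simp [hx]
  · rw [Set.indicator_of_mem (Set.mem_compl hx), Real.enorm_eq_ofReal_abs,
      ← ENNReal.ofReal_mul (by positivity)]
    exact ENNReal.ofReal_le_ofReal
      (Real.le_rpow_neg_mul_rpow_mul_rpow_neg hp hlam hφx (hsx hx))

theorem MeasureTheory.Lp.exists_norm_le_and_coeFn_sub_holder_ae_eq (g : Lp ℝ 2 μ) {lam : ℝ}
    (hlam : 0 ≤ lam) (f : Lp ℝ 1 μ) :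
    ∃ h : Lp ℝ 2 μ, ‖h‖ ≤ lam * ‖g‖ ∧
      ⇑(f - (ContinuousLinearMap.mul ℝ ℝ).holderL μ 2 2 1 g h)
        =ᵐ[μ] {x | |f x| ≤ lam * g x ^ 2}ᶜ.indicator f := by
  set s := {x | |f x| ≤ lam * g x ^ 2}
  have hs : MeasurableSet s := measurableSet_le (Lp.stronglyMeasurable f).measurable.abs
    (((Lp.stronglyMeasurable g).measurable.pow_const 2).const_mul lam)
  set h₀ := s.indicator fun x => f x / g x
  have h₀_le : ∀ x, ‖h₀ x‖ ≤ lam * ‖g x‖ := by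
    intro x
    simp only [h₀, Set.indicator_apply, Real.norm_eq_abs]
    split_ifs with hx
    · exact abs_div_le_mul_abs_of_abs_le_mul_sq hx
    · rw [abs_zero]
      positivity
  have h₀_mem : MemLp h₀ 2 μ := (Lp.memLp g).of_le_mul
    (((Lp.stronglyMeasurable f).measurable.div (Lp.stronglyMeasurable g).measurable).indicator
      hs).aestronglyMeasurable (ae_of_all _ h₀_le)
  set h := h₀_mem.toLp h₀
  have hmul : ⇑((ContinuousLinearMap.mul ℝ ℝ).holderL μ 2 2 1 g h) =ᵐ[μ] fun x => g x * h x :=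
    ContinuousLinearMap.coeFn_holder _ _ _
  refine ⟨h, Lp.norm_le_mul_norm_of_ae_le_mul ?_, ?_⟩
  · filter_upwards [h₀_mem.coeFn_toLp] with x hx
    rw [hx]
    exact h₀_le x
  · filter_upwards [Lp.coeFn_sub f ((ContinuousLinearMap.mul ℝ ℝ).holderL μ 2 2 1 g h), hmul,
      h₀_mem.coeFn_toLp] with x hsub hmulx hh₀
    rw [hsub, Pi.sub_apply, hmulx, hh₀]
    simp only [h₀, Set.indicator_apply, Set.mem_compl_iff]
    split_ifs with hx
    · exact sub_eq_zero.2 (mul_div_cancel_of_abs_le_mul_sq hx).symm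
    · rw [mul_zero, sub_zero]

theorem MeasureTheory.Lp.exists_norm_le_and_norm_sub_holder_le {φ : α → ℝ}
    (hφpos : ∀ᵐ x ∂μ, 0 < φ x) {g : Lp ℝ 2 μ} (hg : g =ᵐ[μ] fun x => √(φ x))
    {p lam : ℝ} (hp : 1 < p) (hlam : 0 < lam) {M : ℝ≥0} {f : Lp ℝ 1 μ}
    (hf : ∫⁻ x, ENNReal.ofReal (|f x| ^ p * φ x ^ (-(p - 1))) ∂μ ≤ M) :
    ∃ h : Lp ℝ 2 μ, ‖h‖ ≤ lam * ‖g‖ ∧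
      ‖f - (ContinuousLinearMap.mul ℝ ℝ).holderL μ 2 2 1 g h‖ ≤ lam ^ (-(p - 1)) * M := by
  obtain ⟨h, hh, hres⟩ := exists_norm_le_and_coeFn_sub_holder_ae_eq g hlam.le f
  have hs : ∀ᵐ x ∂μ, x ∉ {x | |f x| ≤ lam * g x ^ 2} → lam * φ x < |f x| := by
    filter_upwards [hφpos, hg] with x hφx hgx hx
    simpa [hgx, Real.sq_sqrt hφx.le] using hx
  refine ⟨h, hh, ?_⟩
  rw [Lp.norm_def, eLpNorm_congr_ae hres]
  refine ENNReal.toReal_le_of_le_ofReal (by positivity) ?_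
  calc _ ≤ ENNReal.ofReal (lam ^ (-(p - 1)))
          * ∫⁻ x, ENNReal.ofReal (|f x| ^ p * φ x ^ (-(p - 1))) ∂μ :=
        eLpNorm_one_indicator_compl_le hp hlam hφpos hs
    _ ≤ ENNReal.ofReal (lam ^ (-(p - 1))) * M := by gcongr
    _ = ENNReal.ofReal (lam ^ (-(p - 1)) * M) := by
        rw [ENNReal.ofReal_mul (by positivity), ENNReal.ofReal_coe_nnreal]

end Measure

theorem stmt_0_general {α : Type*} [MeasurableSpace α] (μ : Measure α)
    (φ : α → ℝ) (hφpos : ∀ᵐ x ∂μ, 0 < φ x)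
    (hφint : Integrable φ μ)
    (p q M : ℝ) (hp : 1 < p) (hpq : 1 / p + 1 / q = 1) :
    IsCompact (@closure (WeakSpace ℝ (Lp ℝ 1 μ)) _
      {f : Lp ℝ 1 μ |
        ∫⁻ x, ENNReal.ofReal (|f x| ^ p * φ x ^ (-(p / q))) ∂μ ≤ ENNReal.ofReal M}) := by
  have hpq' : p / q = p - 1 := by
    rw [div_eq_mul_one_div, eq_sub_of_add_eq' hpq]
    field_simp
  simp_rw [hpq']
  set g := hφint.memLp_two_sqrt.toLp _
  set T := (ContinuousLinearMap.mul ℝ ℝ).holderL μ 2 2 1 g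
  refine WeakSpace.isCompact_closure_of_forall_exists_isCompact_norm_sub_le _ fun ε hε => ?_
  obtain ⟨lam, hlamε, hlam⟩ : ∃ lam : ℝ, lam ^ (-(p - 1)) * M.toNNReal < ε ∧ 0 < lam := by
    have : Filter.Tendsto (fun lam : ℝ => lam ^ (-(p - 1)) * M.toNNReal) Filter.atTop (nhds 0) := by
      simpa using (tendsto_rpow_neg_atTop (sub_pos.2 hp)).mul_const (M.toNNReal : ℝ)
    exact ((this.eventually (gt_mem_nhds hε)).and (Filter.eventually_gt_atTop 0)).exists
  set B := (toWeakSpace ℝ (Lp ℝ 2 μ)).symm ⁻¹' closedBall 0 (lam * ‖g‖)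
  have hB : IsCompact (closure B) :=
    InnerProductSpace.isCompact_closure_of_isBounded B isBounded_closedBall
  refine ⟨WeakSpace.map T '' closure B, hB.image (WeakSpace.map T).continuous, fun f hf => ?_⟩
  obtain ⟨h, hh, hfh⟩ :=
    Lp.exists_norm_le_and_norm_sub_holder_le hφpos hφint.memLp_two_sqrt.coeFn_toLp hp hlam hf
  exact ⟨WeakSpace.map T (toWeakSpace ℝ _ h),
    ⟨_, subset_closure (mem_closedBall_zero_iff.2 hh), rfl⟩, hfh.trans hlamε.le⟩

/-- Lemma 3 of the paper (Dunford–Schwartz criterion): for a σ-finite measure `μ`,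
a measurable `φ` with `φ > 0` a.e. and `∫ φ dμ < ∞`, conjugate exponents
`p, q > 1` and `M ≥ 0`, the set
`K = { f ∈ L¹(μ) : ∫ |f|^p φ^{-p/q} dμ ≤ M }` is relatively compact in `L¹(μ)`
endowed with the weak topology `σ(L¹, L^∞)`. -/
theorem stmt_0 {α : Type*} [MeasurableSpace α] (μ : Measure α) [SigmaFinite μ]
    (φ : α → ℝ) (hφm : Measurable φ) (hφpos : ∀ᵐ x ∂μ, 0 < φ x)
    (hφint : Integrable φ μ)
    (p q M : ℝ) (hp : 1 < p) (hq : 1 < q) (hpq : 1 / p + 1 / q = 1) (hM : 0 ≤ M) :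
    IsCompact (@closure (WeakSpace ℝ (Lp ℝ 1 μ)) _
      {f : Lp ℝ 1 μ |
        ∫⁻ x, ENNReal.ofReal (|f x| ^ p * φ x ^ (-(p / q))) ∂μ ≤ ENNReal.ofReal M}) :=
  stmt_0_general μ φ hφpos hφint p q M hp hpq
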